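/- arXiv:0905.3700 — 5 statements merged into one kernel-verified Lean document; each statement's English description precedes it below -/
import Mathlib

section
/- Let ρ > 0 and let ν_m ≠ ν_{m'} be two distinct eigenvalues (roots of ρν/(1+ν)² = −m and ρν/(1+ν)² = −m' respectively, possibly with m = m' but different branches). Let φ_m(n), φ_{m'}(n) be the corresponding eigenfunctions satisfying (ν+1)(n+1)φ(n) = nφ(n−1) − ρφ(n) + ρφ(n+1). Then Σ_{n=0}^∞ ((n+1)/n!) ρⁿ φ_m(n) φ_{m'}(n) = 0, provided this series converges absolutely. -/
/-!
The weight `w n = ρ ^ n / n!` satisfies `(n + 1) w (n + 1) = ρ w n`, which makes the three-term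
operator symmetric. Green's identity then reads
`(ν - ν') ∑_{n ≤ N} (n + 1) w n φ n ψ n = W N` with the Wronskian
`W N = ρ w N (φ (N + 1) ψ N - φ N ψ (N + 1))`, and it remains to show `W N → 0`.
By absolute convergence the cross terms `c n = w n φ (n + 1) ψ n` have summable increments
`c (n + 2) - c n`, so `c` converges along even and along odd indices, to `p` and `q` say.
The recurrence one order further up forces `(ν' + 1) q = (ν + 1) p` and `(ν' + 1) p = (ν + 1) q`,
whence `p + q = 0` as `ν ≠ ν'`, and `W` tends to `ρ (p + q) = 0` along odd indices.
-/

open Filter Topology Finset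

lemma Summable.of_natCast_add_one_mul {t : ℕ → ℝ}
    (ht : Summable fun n : ℕ => ((n : ℝ) + 1) * t n) : Summable t :=
  ht.abs.of_norm_bounded fun n => by
    rw [Real.norm_eq_abs, abs_mul, abs_of_nonneg (by positivity : (0 : ℝ) ≤ (n : ℝ) + 1)]
    exact le_mul_of_one_le_left (abs_nonneg _) (by simp)

lemma Summable.affine_mul {t : ℕ → ℝ} (ht : Summable fun n : ℕ => ((n : ℝ) + 1) * t n)
    (a b : ℝ) :
    Summable fun n : ℕ => (a * n + b) * t n :=
  ((ht.mul_left a).add (ht.of_natCast_add_one_mul.mul_left (b - a))).congr fun n => by ring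

lemma exists_tendsto_of_summable_sub_succ {f : ℕ → ℝ} (h : Summable fun n => f (n + 1) - f n) :
    ∃ L, Tendsto f atTop (𝓝 L) :=
  cauchySeq_tendsto_of_complete <| cauchySeq_of_summable_dist <|
    h.abs.congr fun n => by rw [Real.dist_eq, abs_sub_comm]

lemma exists_tendsto_even_odd_of_summable_sub_two {f : ℕ → ℝ}
    (h : Summable fun n => f (n + 2) - f n) :
    ∃ p q, Tendsto (fun k => f (2 * k)) atTop (𝓝 p) ∧
      Tendsto (fun k => f (2 * k + 1)) atTop (𝓝 q) := by
  obtain ⟨p, hp⟩ := exists_tendsto_of_summable_sub_succ (f := fun k => f (2 * k))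
    (h.comp_injective (mul_right_injective₀ two_ne_zero))
  obtain ⟨q, hq⟩ := exists_tendsto_of_summable_sub_succ (f := fun k => f (2 * k + 1))
    (h.comp_injective ((add_left_injective 1).comp (mul_right_injective₀ two_ne_zero)))
  exact ⟨p, q, hp, hq⟩

lemma eq_zero_of_tendsto_mul_of_tendsto_atTop {α : Type*} {l : Filter α} [l.NeBot]
    {m a : α → ℝ} {A B : ℝ} (hm : Tendsto m l atTop) (ha : Tendsto a l (𝓝 A))
    (hma : Tendsto (fun k => m k * a k) l (𝓝 B)) : A = 0 := by
  refine tendsto_nhds_unique ha ((hma.div_atTop hm).congr' ?_)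
  filter_upwards [hm.eventually_gt_atTop 0] with k hk
  field_simp

/-- At `n = 0` the term `n * φ (n - 1)` vanishes, whatever the truncated `φ (0 - 1) = φ 0` is. -/
def IsEigenfunction (ρ ν : ℝ) (φ : ℕ → ℝ) : Prop :=
  ∀ n : ℕ, (ν + 1) * (n + 1) * φ n = (n : ℝ) * φ (n - 1) - ρ * φ n + ρ * φ (n + 1)

noncomputable def poissonWeight (ρ : ℝ) (n : ℕ) : ℝ := ρ ^ n / n.factorial

noncomputable def weightedProd (ρ : ℝ) (φ ψ : ℕ → ℝ) (n : ℕ) : ℝ :=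
  poissonWeight ρ n * (φ n * ψ n)

noncomputable def weightedShiftProd (ρ : ℝ) (φ ψ : ℕ → ℝ) (n : ℕ) : ℝ :=
  poissonWeight ρ n * (φ (n + 1) * ψ n)

noncomputable def wronskian (ρ : ℝ) (φ ψ : ℕ → ℝ) (n : ℕ) : ℝ :=
  ρ * (weightedShiftProd ρ φ ψ n - weightedShiftProd ρ ψ φ n)

lemma poissonWeight_succ (ρ : ℝ) (n : ℕ) :
    ((n : ℝ) + 1) * poissonWeight ρ (n + 1) = ρ * poissonWeight ρ n := by
  have := n.factorial_ne_zero
  rw [poissonWeight, poissonWeight, Nat.factorial_succ, pow_succ]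
  push_cast
  field_simp

lemma weightedProd_comm (ρ : ℝ) (φ ψ : ℕ → ℝ) (n : ℕ) :
    weightedProd ρ ψ φ n = weightedProd ρ φ ψ n := by
  rw [weightedProd, weightedProd, mul_comm (ψ n)]

namespace IsEigenfunction

variable {ρ ν ν' : ℝ} {φ ψ : ℕ → ℝ}

lemma apply_one (hφ : IsEigenfunction ρ ν φ) : ρ * φ 1 = (ν + 1 + ρ) * φ 0 := by
  have h := hφ 0
  norm_num at h
  linarith

lemma apply_add_two (hφ : IsEigenfunction ρ ν φ) (n : ℕ) :
    ρ * φ (n + 2) = ((ν + 1) * (n + 2) + ρ) * φ (n + 1) - (n + 1) * φ n := by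
  have h := hφ (n + 1)
  simp only [Nat.add_sub_cancel] at h
  push_cast at h
  linarith

lemma weightedShiftProd_zero (hφ : IsEigenfunction ρ ν φ) (ψ : ℕ → ℝ) :
    ρ * weightedShiftProd ρ φ ψ 0 = (ν + 1 + ρ) * weightedProd ρ φ ψ 0 := by
  simp only [weightedShiftProd, weightedProd]
  linear_combination (poissonWeight ρ 0 * ψ 0) * hφ.apply_one

lemma weightedShiftProd_succ_add (hφ : IsEigenfunction ρ ν φ) (ψ : ℕ → ℝ) (n : ℕ) :
    ρ * (weightedShiftProd ρ φ ψ (n + 1) + weightedShiftProd ρ ψ φ n) =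
      ((ν + 1) * (n + 2) + ρ) * weightedProd ρ φ ψ (n + 1) := by
  simp only [weightedShiftProd, weightedProd]
  linear_combination (poissonWeight ρ (n + 1) * ψ (n + 1)) * hφ.apply_add_two n
    - (φ n * ψ (n + 1)) * poissonWeight_succ ρ n

lemma weightedShiftProd_recurrence (hφ : IsEigenfunction ρ ν φ) (hψ : IsEigenfunction ρ ν' ψ)
    (n : ℕ) :
    ((ν' + 1) * (n + 2) + ρ) * weightedShiftProd ρ φ ψ (n + 1)
      - ((ν + 1) * (n + 2) + ρ) * weightedShiftProd ρ φ ψ n =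
      (n + 2) * weightedProd ρ φ ψ (n + 2) - (n + 1) * weightedProd ρ φ ψ n := by
  have hw := poissonWeight_succ ρ (n + 1)
  push_cast at hw
  simp only [weightedShiftProd, weightedProd, Nat.add_assoc, Nat.reduceAdd] at hw ⊢
  linear_combination (poissonWeight ρ n * ψ n) * hφ.apply_add_two n
    - (poissonWeight ρ (n + 1) * φ (n + 2)) * hψ.apply_add_two n
    + (φ (n + 2) * ψ n) * poissonWeight_succ ρ n - (φ (n + 2) * ψ (n + 2)) * hw

lemma wronskian_eq_sum (hφ : IsEigenfunction ρ ν φ) (hψ : IsEigenfunction ρ ν' ψ) (N : ℕ) :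
    wronskian ρ φ ψ N =
      (ν - ν') * ∑ n ∈ range (N + 1), ((n : ℝ) + 1) * weightedProd ρ φ ψ n := by
  induction N with
  | zero =>
    have h := hψ.weightedShiftProd_zero φ
    rw [weightedProd_comm] at h
    simp only [wronskian, zero_add, sum_range_one, Nat.cast_zero]
    linear_combination hφ.weightedShiftProd_zero ψ - h
  | succ N ih =>
    have h := hψ.weightedShiftProd_succ_add φ N
    rw [weightedProd_comm] at h
    rw [wronskian] at ih ⊢
    rw [sum_range_succ]
    push_cast
    linear_combination ih + hφ.weightedShiftProd_succ_add ψ N - h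

lemma summable_weightedShiftProd_succ_add (hρ : ρ ≠ 0) (hφ : IsEigenfunction ρ ν φ)
    (hs : Summable fun n : ℕ => ((n : ℝ) + 1) * weightedProd ρ φ ψ n) :
    Summable fun n => weightedShiftProd ρ φ ψ (n + 1) + weightedShiftProd ρ ψ φ n := by
  rw [← summable_mul_left_iff hρ]
  simp_rw [hφ.weightedShiftProd_succ_add ψ]
  exact ((summable_nat_add_iff 1).mpr (hs.affine_mul (ν + 1) (ν + 1 + ρ))).congr fun n => by
    push_cast; ring

lemma eq_of_tendsto_weightedShiftProd (hφ : IsEigenfunction ρ ν φ) (hψ : IsEigenfunction ρ ν' ψ)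
    (hs : Summable fun n : ℕ => ((n : ℝ) + 1) * weightedProd ρ φ ψ n)
    {f : ℕ → ℕ} (hf : Tendsto f atTop atTop) {p q : ℝ}
    (hp : Tendsto (fun k => weightedShiftProd ρ φ ψ (f k)) atTop (𝓝 p))
    (hq : Tendsto (fun k => weightedShiftProd ρ φ ψ (f k + 1)) atTop (𝓝 q)) :
    (ν' + 1) * q = (ν + 1) * p := by
  have hs₀ := hs.tendsto_atTop_zero
  have ht₀ := hs.of_natCast_add_one_mul.tendsto_atTop_zero
  have hε : Tendsto (fun n : ℕ => (n + 2) * weightedProd ρ φ ψ (n + 2)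
      - (n + 1) * weightedProd ρ φ ψ n) atTop (𝓝 0) := by
    have h := ((hs₀.sub ht₀).comp (tendsto_add_atTop_nat 2)).sub hs₀
    rw [sub_zero, sub_zero] at h
    refine h.congr fun n => ?_
    simp only [Function.comp_apply]
    push_cast
    ring
  refine sub_eq_zero.mp <| eq_zero_of_tendsto_mul_of_tendsto_atTop
    (m := fun k => (f k : ℝ) + 2)
    (tendsto_atTop_add_const_right _ 2 (tendsto_natCast_atTop_atTop.comp hf))
    ((hq.const_mul (ν' + 1)).sub (hp.const_mul (ν + 1)))
    (((hε.comp hf).sub ((hq.sub hp).const_mul ρ)).congr fun k => ?_)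
  simp only [Function.comp_apply]
  linear_combination -(hφ.weightedShiftProd_recurrence hψ (f k))

lemma tendsto_wronskian_two_mul_add_one (hρ : ρ ≠ 0) (hne : ν ≠ ν')
    (hφ : IsEigenfunction ρ ν φ) (hψ : IsEigenfunction ρ ν' ψ)
    (hs : Summable fun n : ℕ => ((n : ℝ) + 1) * weightedProd ρ φ ψ n) :
    Tendsto (fun k => wronskian ρ φ ψ (2 * k + 1)) atTop (𝓝 0) := by
  set c := weightedShiftProd ρ φ ψ
  have hr := hφ.summable_weightedShiftProd_succ_add hρ hs
  have hs' : Summable fun n : ℕ => ((n : ℝ) + 1) * weightedProd ρ ψ φ n := by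
    simpa only [weightedProd_comm] using hs
  have hr' := hψ.summable_weightedShiftProd_succ_add hρ hs'
  obtain ⟨p, q, hp, hq⟩ := exists_tendsto_even_odd_of_summable_sub_two (f := c)
    (((summable_nat_add_iff 1).mpr hr).sub hr' |>.congr fun n => by ring)
  have hp' : Tendsto (fun k => c (2 * k + 1 + 1)) atTop (𝓝 p) :=
    hp.comp (tendsto_add_atTop_nat 1)
  have h2k : Tendsto (fun k : ℕ => 2 * k) atTop atTop :=
    (strictMono_mul_left_of_pos two_pos).tendsto_atTop
  have h2k1 : Tendsto (fun k : ℕ => 2 * k + 1) atTop atTop :=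
    (tendsto_add_atTop_nat 1).comp h2k
  have h_even := hφ.eq_of_tendsto_weightedShiftProd hψ hs h2k hp hq
  have h_odd := hφ.eq_of_tendsto_weightedShiftProd hψ hs h2k1 hq hp'
  have hpq : p + q = 0 := by
    have h : (ν' - ν) * (p + q) = 0 := by linear_combination h_even + h_odd
    exact (mul_eq_zero.mp h).resolve_left (sub_ne_zero.mpr hne.symm)
  -- `W (2k+1) = ρ (c (2k) + c (2k+1)) - ρ (c' (2k+1) + c (2k))` with `c'` the cross term of
  -- `(ψ, φ)`, and the last bracket is summable.
  have h := ((hp.add hq).const_mul ρ).sub ((hr'.tendsto_atTop_zero.comp h2k).const_mul ρ)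
  rw [hpq, mul_zero, sub_zero] at h
  refine h.congr fun k => ?_
  simp only [Function.comp_apply, wronskian]
  ring

end IsEigenfunction

theorem eigenfunction_orthogonality (ρ : ℝ) (hρ : 0 < ρ) (νm νm' : ℝ) (hne : νm ≠ νm')
    (φ φ' : ℕ → ℝ)
    (hφ : ∀ n : ℕ, (νm + 1) * (n + 1) * φ n =
      (n : ℝ) * φ (n - 1) - ρ * φ n + ρ * φ (n + 1))
    (hφ' : ∀ n : ℕ, (νm' + 1) * (n + 1) * φ' n =
      (n : ℝ) * φ' (n - 1) - ρ * φ' n + ρ * φ' (n + 1))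
    (hsum : Summable fun n : ℕ =>
      ((n : ℝ) + 1) / (Nat.factorial n : ℝ) * ρ ^ n * |φ n * φ' n|) :
    ∑' n : ℕ, ((n : ℝ) + 1) / (Nat.factorial n : ℝ) * ρ ^ n * φ n * φ' n = 0 := by
  have hs : Summable fun n : ℕ => ((n : ℝ) + 1) * weightedProd ρ φ φ' n :=
    summable_abs_iff.mp <| hsum.congr fun n => by
      simp only [weightedProd, poissonWeight, abs_mul, abs_div, abs_pow, abs_of_pos hρ,
        Nat.abs_cast, abs_of_nonneg (by positivity : (0 : ℝ) ≤ (n : ℝ) + 1)]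
      ring
  set S := ∑' n : ℕ, ((n : ℝ) + 1) * weightedProd ρ φ φ' n
  have hW : Tendsto (wronskian ρ φ φ') atTop (𝓝 ((νm - νm') * S)) :=
    ((hs.hasSum.tendsto_sum_nat.comp (tendsto_add_atTop_nat 1)).const_mul _).congr fun N =>
      (IsEigenfunction.wronskian_eq_sum hφ hφ' N).symm
  have hW₀ := IsEigenfunction.tendsto_wronskian_two_mul_add_one hρ.ne' hne hφ hφ' hs
  have hS : (νm - νm') * S = 0 :=
    tendsto_nhds_unique (hW.comp ((tendsto_add_atTop_nat 1).comp
      (strictMono_mul_left_of_pos two_pos).tendsto_atTop)) hW₀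
  calc ∑' n : ℕ, ((n : ℝ) + 1) / (Nat.factorial n : ℝ) * ρ ^ n * φ n * φ' n
      = S := tsum_congr fun n => by simp only [weightedProd, poissonWeight]; ring
    _ = 0 := (mul_eq_zero.mp hS).resolve_left (sub_ne_zero.mpr hne)
end

section
/- Let ρ > 0, let θ_p = −1 + (−ρ+√(ρ²+4ρ))/2, and let θ be real with θ ∈ (θ_p, 0); put r = ρθ/(1+θ)². Define H_l(θ) = ∫_{1/(1+θ)}^∞ z^l (z − 1/(1+θ))^r exp(−ρz/(1+θ)) dz. Then Σ_{l=0}^∞ (ρ^l/l!) H_l(θ) = e^r Γ(r+1) (−(1+θ)/(ρθ))^{r+1}. -/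
open MeasureTheory Real Set

theorem sum_H_closed_form (ρ θ : ℝ) (hρ : 0 < ρ)
    (hθp : -1 + (-ρ + Real.sqrt (ρ ^ 2 + 4 * ρ)) / 2 < θ) (hθ0 : θ < 0) :
    HasSum
      (fun l : ℕ => ρ ^ l / (Nat.factorial l : ℝ) *
        ∫ z in Set.Ioi (1 / (1 + θ)),
          z ^ l * (z - 1 / (1 + θ)) ^ (ρ * θ / (1 + θ) ^ 2) * Real.exp (-ρ * z / (1 + θ)))
      (Real.exp (ρ * θ / (1 + θ) ^ 2) * Real.Gamma (ρ * θ / (1 + θ) ^ 2 + 1) *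
        (-(1 + θ) / (ρ * θ)) ^ (ρ * θ / (1 + θ) ^ 2 + 1)) := by
  -- Basic positivity facts
  have hsqnn : (0:ℝ) ≤ ρ ^ 2 + 4 * ρ := by positivity
  have hsq : ρ < Real.sqrt (ρ ^ 2 + 4 * ρ) := by
    have : Real.sqrt (ρ ^ 2) < Real.sqrt (ρ ^ 2 + 4 * ρ) :=
      Real.sqrt_lt_sqrt (by positivity) (by nlinarith)
    rwa [Real.sqrt_sq hρ.le] at this
  have hu : 0 < 1 + θ := by
    have := Real.sqrt_nonneg (ρ ^ 2 + 4 * ρ)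
    nlinarith
  have hu1 : 1 + θ < 1 := by linarith
  have hkey : 0 < (1 + θ) ^ 2 + ρ * θ := by
    have h2 : Real.sqrt (ρ ^ 2 + 4 * ρ) < 2 * (1 + θ) + ρ := by linarith
    have h3 := Real.sq_sqrt hsqnn
    nlinarith [Real.sqrt_nonneg (ρ ^ 2 + 4 * ρ)]
  set u : ℝ := 1 + θ with hu_def
  set r : ℝ := ρ * θ / u ^ 2 with hr_def
  have hu0 : u ≠ 0 := ne_of_gt hu
  have hr1 : -1 < r := by
    rw [hr_def, neg_lt, ← neg_div, div_lt_one (by positivity)]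
    nlinarith
  have hrθ0 : ρ * θ < 0 := mul_neg_of_pos_of_neg hρ hθ0
  set a : ℝ := 1 / u with ha_def
  have ha0 : 0 < a := by positivity
  set c : ℝ := ρ / u with hc_def
  set b : ℝ := -(ρ * θ) / u with hb_def
  have hb : 0 < b := by rw [hb_def]; exact div_pos (by linarith) hu
  have harith : ∀ y : ℝ, r + -(b * y) = ρ * (y + a) + -(c * (y + a)) := by
    intro y
    rw [hr_def, hb_def, hc_def, ha_def]
    field_simp
    ring
  -- the summand functions and the limit function
  set F : ℕ → ℝ → ℝ := fun l y =>
    ρ ^ l / (Nat.factorial l : ℝ) * ((y + a) ^ l * y ^ r * Real.exp (-(c * (y + a)))) with hF_def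
  set g : ℝ → ℝ := fun y => y ^ r * (Real.exp r * Real.exp (-(b * y))) with hg_def
  -- pointwise HasSum
  have hFsum : ∀ y : ℝ, 0 < y → HasSum (fun l => F l y) (g y) := by
    intro y hy
    have h1 : HasSum (fun l : ℕ => (ρ * (y + a)) ^ l / (Nat.factorial l : ℝ))
        (Real.exp (ρ * (y + a))) := by
      rw [Real.exp_eq_exp_ℝ]
      exact NormedSpace.expSeries_div_hasSum_exp (ρ * (y + a))
    have h2 := h1.mul_right (y ^ r * Real.exp (-(c * (y + a))))
    convert h2 using 1
    · rfl
    · funext l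
      rw [hF_def]; simp only [mul_pow]; ring
    · have hrhs : Real.exp (ρ * (y + a)) * (y ^ r * Real.exp (-(c * (y + a)))) =
          y ^ r * Real.exp (ρ * (y + a) + -(c * (y + a))) := by
        rw [Real.exp_add]; ring
      rw [hrhs]
      show y ^ r * (Real.exp r * Real.exp (-(b * y))) = _
      rw [← Real.exp_add, harith y]
  -- nonnegativity
  have hFnn : ∀ l : ℕ, ∀ y : ℝ, 0 < y → 0 ≤ F l y := by
    intro l y hy
    rw [hF_def]
    have : (0:ℝ) ≤ y + a := by positivity
    positivity
  -- each F l is dominated by g on Ioi 0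
  have hFle : ∀ l : ℕ, ∀ y : ℝ, 0 < y → F l y ≤ g y := by
    intro l y hy
    exact le_hasSum (hFsum y hy) l (fun j _ => hFnn j y hy)
  -- g is integrable on Ioi 0
  have hg_int : IntegrableOn g (Ioi 0) := by
    have h0 := integrableOn_rpow_mul_exp_neg_mul_rpow (p := 1) (s := r) (b := b) hr1 zero_lt_one hb
    simp only [Real.rpow_one] at h0
    exact IntegrableOn.congr_fun (h0.mul_const (Real.exp r))
      (fun y _ => by show _ = y ^ r * (Real.exp r * Real.exp (-(b * y))); ring)
      measurableSet_Ioi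
  -- measurability
  have hFmeas : ∀ l : ℕ, AEStronglyMeasurable (F l) (volume.restrict (Ioi 0)) := by
    intro l
    rw [hF_def]
    apply Measurable.aestronglyMeasurable
    fun_prop
  -- integrability of each F l
  have hF_int : ∀ l : ℕ, IntegrableOn (F l) (Ioi 0) := by
    intro l
    refine Integrable.mono' hg_int (hFmeas l) ?_
    rw [ae_restrict_iff' measurableSet_Ioi]
    filter_upwards with y hy
    rw [Real.norm_eq_abs, abs_of_nonneg (hFnn l y hy)]
    exact hFle l y hy
  -- summability of the integrals via Tonelli
  have hF_ae_nonneg : ∀ l : ℕ, 0 ≤ᵐ[volume.restrict (Ioi 0)] F l := by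
    intro l
    rw [Filter.EventuallyLE, ae_restrict_iff' measurableSet_Ioi]
    filter_upwards with y hy
    exact hFnn l y hy
  have h_int_eq : ∀ l : ℕ, ∫ y in Ioi 0, F l y =
      (∫⁻ y in Ioi 0, ENNReal.ofReal (F l y)).toReal := by
    intro l
    exact integral_eq_lintegral_of_nonneg_ae (hF_ae_nonneg l) (hFmeas l)
  have h_lint_tsum : ∑' l : ℕ, ∫⁻ y in Ioi 0, ENNReal.ofReal (F l y) =
      ∫⁻ y in Ioi 0, ∑' l : ℕ, ENNReal.ofReal (F l y) :=
    (lintegral_tsum (fun l => (ENNReal.measurable_ofReal.comp_aemeasurable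
      (hFmeas l).aemeasurable))).symm
  have h_ptwise : ∫⁻ y in Ioi 0, ∑' l : ℕ, ENNReal.ofReal (F l y) =
      ∫⁻ y in Ioi 0, ENNReal.ofReal (g y) := by
    apply lintegral_congr_ae
    filter_upwards [ae_restrict_mem measurableSet_Ioi] with y hy
    rw [← ENNReal.ofReal_tsum_of_nonneg (fun l => hFnn l y hy) (hFsum y hy).summable,
      (hFsum y hy).tsum_eq]
  have h_fin : ∫⁻ y in Ioi 0, ENNReal.ofReal (g y) < ⊤ := by
    have := hg_int.2
    rw [hasFiniteIntegral_iff_norm] at this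
    refine lt_of_le_of_lt (lintegral_mono fun y => ?_) this
    exact ENNReal.ofReal_le_ofReal (le_abs_self _)
  have h_sum_fin : ∑' l : ℕ, ∫⁻ y in Ioi 0, ENNReal.ofReal (F l y) ≠ ⊤ := by
    rw [h_lint_tsum, h_ptwise]; exact h_fin.ne
  have h_summable : Summable fun l : ℕ => ∫ y in Ioi 0, F l y := by
    simp_rw [h_int_eq]
    exact ENNReal.summable_toReal h_sum_fin
  -- the main HasSum via interchanging sum and integral
  have h_main : HasSum (fun l : ℕ => ∫ y in Ioi 0, F l y)
      (∫ y in Ioi 0, ∑' l : ℕ, F l y) := by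
    apply hasSum_integral_of_summable_integral_norm hF_int
    refine h_summable.congr fun l => ?_
    refine (setIntegral_congr_fun measurableSet_Ioi fun y hy => ?_).symm
    rw [Real.norm_eq_abs, abs_of_nonneg (hFnn l y hy)]
  -- identify each term with the statement's term
  have h_term : ∀ l : ℕ, ρ ^ l / (Nat.factorial l : ℝ) *
      ∫ z in Set.Ioi (1 / (1 + θ)),
        z ^ l * (z - 1 / (1 + θ)) ^ (ρ * θ / (1 + θ) ^ 2) * Real.exp (-ρ * z / (1 + θ)) =
      ∫ y in Ioi 0, F l y := by
    intro l
    have hchange := (measurePreserving_add_right volume a).setIntegral_preimage_emb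
      (measurableEmbedding_addRight a)
      (fun z => z ^ l * (z - a) ^ r * Real.exp (-(c * z))) (Ioi a)
    rw [preimage_add_const_Ioi, sub_self] at hchange
    have heq1 : (∫ z in Set.Ioi (1 / (1 + θ)),
        z ^ l * (z - 1 / (1 + θ)) ^ (ρ * θ / (1 + θ) ^ 2) * Real.exp (-ρ * z / (1 + θ))) =
        ∫ z in Ioi a, z ^ l * (z - a) ^ r * Real.exp (-(c * z)) := by
      refine setIntegral_congr_fun measurableSet_Ioi fun z _ => ?_
      rw [ha_def, hr_def, hc_def, hu_def]
      congr 1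
      ring
    rw [heq1, ← hchange, hF_def]
    rw [← integral_const_mul]
    refine setIntegral_congr_fun measurableSet_Ioi fun y _ => ?_
    simp only [add_sub_cancel_right]
  -- identify the sum with the statement's value
  have h_value : (∫ y in Ioi 0, ∑' l : ℕ, F l y) =
      Real.exp (ρ * θ / (1 + θ) ^ 2) * Real.Gamma (ρ * θ / (1 + θ) ^ 2 + 1) *
        (-(1 + θ) / (ρ * θ)) ^ (ρ * θ / (1 + θ) ^ 2 + 1) := by
    have heq2 : (∫ y in Ioi 0, ∑' l : ℕ, F l y) = ∫ y in Ioi 0, g y :=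
      setIntegral_congr_fun measurableSet_Ioi fun y hy => (hFsum y hy).tsum_eq
    have heq3 : (∫ y in Ioi 0, g y) =
        Real.exp r * ∫ y in Ioi 0, y ^ (r + 1 - 1) * Real.exp (-(b * y)) := by
      rw [← integral_const_mul]
      refine setIntegral_congr_fun measurableSet_Ioi fun y _ => ?_
      rw [hg_def, show r + 1 - 1 = r from by ring]
      ring
    rw [heq2, heq3, integral_rpow_mul_exp_neg_mul_Ioi (by linarith) hb]
    have h1b : (1 : ℝ) / b = -(1 + θ) / (ρ * θ) := by
      rw [hb_def, one_div_div, div_neg, hu_def, neg_div]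
    rw [h1b, ← hu_def, ← hr_def]
    ring
  have hfun : (fun l : ℕ => ρ ^ l / (Nat.factorial l : ℝ) *
      ∫ z in Set.Ioi (1 / (1 + θ)),
        z ^ l * (z - 1 / (1 + θ)) ^ (ρ * θ / (1 + θ) ^ 2) * Real.exp (-ρ * z / (1 + θ))) =
      fun l : ℕ => ∫ y in Ioi 0, F l y := funext h_term
  rw [hfun, ← h_value]
  exact h_main
end

section
/- Let θ > 0, ρ > 0, r = ρθ/(1+θ)², and G_n(θ) = ∫_0^{1/(1+θ)} zⁿ (1/(1+θ) − z)^r exp(−ρz/(1+θ)) dz. Then G_n satisfies the homogeneous recurrence ρ G_{n+1} − [(n+1)(1+θ) + ρ] G_n + n G_{n−1} = 0 for all n ≥ 1. -/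
/-!
Integrate by parts against `H(z) = z^{n} (c - z)^{r+1} e^{-a z}` with `c = 1/(1+θ)`,
`a = ρ/(1+θ)`: `H` vanishes at both ends of `[0, c]`, and expanding `H'` with
`(c - z)^{r+1} = (c - z)(c - z)^r` gives the three-term relation
`a G_{n+1} - (n + 1 + r + a c) G_n + n c G_{n-1} = 0`. The exponent
`r = ρθ/(1+θ)²` is exactly the one with `r + a c = a`, and multiplying by `1 + θ`
yields the stated recurrence.
-/

open Real intervalIntegral

lemma Real.rpow_add_one_eq_rpow_mul (x : ℝ) {y : ℝ} (hy : y + 1 ≠ 0) :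
    x ^ (y + 1) = x ^ y * x := by
  rcases eq_or_ne x 0 with rfl | hx
  · exact rpow_add_one' le_rfl hy
  · exact rpow_add_one hx y

noncomputable def betaExpIntegrand (c r a : ℝ) (k : ℕ) (z : ℝ) : ℝ :=
  z ^ k * (c - z) ^ r * exp (-a * z)

noncomputable def betaExpMoment (c r a : ℝ) (k : ℕ) : ℝ :=
  ∫ z in (0 : ℝ)..c, betaExpIntegrand c r a k z

section

variable {c r a : ℝ}

lemma continuous_betaExpIntegrand (hr : 0 ≤ r) (k : ℕ) :
    Continuous (betaExpIntegrand c r a k) := by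
  unfold betaExpIntegrand
  have := continuous_rpow_const hr
  fun_prop

lemma hasDerivAt_pow_mul_rpow_add_one_mul_exp (hr : 0 ≤ r) (m : ℕ) (z : ℝ) :
    HasDerivAt (fun x => x ^ (m + 1) * (c - x) ^ (r + 1) * exp (-a * x))
      (a * betaExpIntegrand c r a (m + 2) z
        - ((m + 2) + r + a * c) * betaExpIntegrand c r a (m + 1) z
        + (m + 1) * c * betaExpIntegrand c r a m z) z := by
  have hpow : HasDerivAt (fun x : ℝ => x ^ (m + 1)) ((m + 1) * z ^ m) z := by
    simpa using hasDerivAt_pow (m + 1) z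
  have hrpow : HasDerivAt (fun x => (c - x) ^ (r + 1)) (-(r + 1) * (c - z) ^ r) z := by
    simpa using ((hasDerivAt_id z).const_sub c).rpow_const (p := r + 1) (Or.inr (by linarith))
  have hexp : HasDerivAt (fun x => exp (-a * x)) (exp (-a * z) * -a) z := by
    simpa using ((hasDerivAt_id z).const_mul (-a)).exp
  refine ((hpow.mul hrpow).mul hexp).congr_deriv ?_
  simp only [Pi.mul_apply, betaExpIntegrand]
  rw [rpow_add_one_eq_rpow_mul _ (by linarith)]
  ring

theorem betaExpMoment_recurrence (hr : 0 ≤ r) (m : ℕ) :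
    a * betaExpMoment c r a (m + 2) - ((m + 2) + r + a * c) * betaExpMoment c r a (m + 1)
      + (m + 1) * c * betaExpMoment c r a m = 0 := by
  have hint (k : ℕ) : IntervalIntegrable (betaExpIntegrand c r a k) MeasureTheory.volume 0 c :=
    (continuous_betaExpIntegrand hr k).intervalIntegrable 0 c
  have hftc := integral_eq_sub_of_hasDerivAt
    (fun z _ => hasDerivAt_pow_mul_rpow_add_one_mul_exp (c := c) (a := a) hr m z)
    ((((hint _).const_mul _).sub ((hint _).const_mul _)).add ((hint _).const_mul _))
  rw [integral_add (((hint _).const_mul _).sub ((hint _).const_mul _)) ((hint _).const_mul _),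
    integral_sub ((hint _).const_mul _) ((hint _).const_mul _),
    integral_const_mul, integral_const_mul, integral_const_mul] at hftc
  simpa [betaExpMoment, zero_rpow (by linarith : r + 1 ≠ 0)] using hftc

end

theorem G_recurrence (ρ θ : ℝ) (hρ : 0 < ρ) (hθ : 0 < θ)
    (G : ℕ → ℝ)
    (hG : ∀ n : ℕ, G n = ∫ z in (0 : ℝ)..(1 / (1 + θ)),
      z ^ n * (1 / (1 + θ) - z) ^ (ρ * θ / (1 + θ) ^ 2) * Real.exp (-ρ * z / (1 + θ))) :
    ∀ n : ℕ, 1 ≤ n →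
      ρ * G (n + 1) - (((n : ℝ) + 1) * (1 + θ) + ρ) * G n + (n : ℝ) * G (n - 1) = 0 := by
  intro n hn
  obtain ⟨m, rfl⟩ := Nat.exists_eq_add_of_le' hn
  have hθ₁ : 1 + θ ≠ 0 := by positivity
  have hG_eq (k : ℕ) :
      G k = betaExpMoment (1 / (1 + θ)) (ρ * θ / (1 + θ) ^ 2) (ρ / (1 + θ)) k := by
    rw [hG, betaExpMoment]
    refine integral_congr fun z _ => ?_
    simp only [betaExpIntegrand]
    ring_nf
  have key := betaExpMoment_recurrence (c := 1 / (1 + θ)) (a := ρ / (1 + θ))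
    (by positivity : 0 ≤ ρ * θ / (1 + θ) ^ 2) m
  rw [← hG_eq, ← hG_eq, ← hG_eq] at key
  field_simp at key
  refine mul_left_cancel₀ hθ₁ ?_
  simp only [Nat.add_sub_cancel, Nat.cast_add, Nat.cast_one]
  linear_combination key
end

section
/- Let θ > 0, ρ > 0, r = ρθ/(1+θ)², and H_n(θ) = ∫_{1/(1+θ)}^∞ zⁿ (z − 1/(1+θ))^r exp(−ρz/(1+θ)) dz. Then H_n satisfies ρ H_{n+1} − [(n+1)(1+θ)+ρ] H_n + n H_{n−1} = 0 for all n ≥ 0 (with the term n H_{n−1} vanishing at n=0). -/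
/-!
Write `a = 1/(1+θ)`, `c = ρ/(1+θ)`, `s = r` and `f_k(z) = z^k (z-a)^s e^{-cz}`,
so that `H_k = ∫_a^∞ f_k`.
Splitting `(z-a)^(s+1) = (z-a)^s (z-a)` shows that the derivative of `z^n (z-a)^(s+1) e^{-cz}`
is `-c f_{n+1} + (n+s+1+ac) f_n - n a f_{n-1}`. That function vanishes at `z = a` and at infinity,
so the integral of its derivative over `(a, ∞)` is zero. Multiplying the resulting three-term
relation by `1+θ` gives the recurrence, because `r(1+θ) + ρ/(1+θ) = ρ`.
-/

open MeasureTheory Set Filter Real Topology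

noncomputable def shiftedGammaIntegrand (a c s : ℝ) (k : ℕ) (z : ℝ) : ℝ :=
  z ^ k * (z - a) ^ s * exp (-c * z)

noncomputable def shiftedGammaMoment (a c s : ℝ) (k : ℕ) : ℝ :=
  ∫ z in Ioi a, shiftedGammaIntegrand a c s k z

namespace shiftedGammaIntegrand

variable {a c s : ℝ}

lemma norm_le (k : ℕ) (ha : 0 ≤ a) (hs : 0 ≤ s) {z : ℝ} (hz : a < z) :
    ‖shiftedGammaIntegrand a c s k z‖ ≤ z ^ ((k : ℝ) + s) * exp (-c * z) := by
  have hz0 : 0 < z := ha.trans_lt hz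
  have hza : 0 ≤ z - a := sub_nonneg.2 hz.le
  rw [shiftedGammaIntegrand, norm_of_nonneg (by positivity), rpow_add hz0, rpow_natCast]
  gcongr
  linarith

lemma continuousOn (k : ℕ) (hs : 0 ≤ s) :
    ContinuousOn (shiftedGammaIntegrand a c s k) (Ici a) := by
  intro z hz
  refine ContinuousAt.continuousWithinAt ?_
  unfold shiftedGammaIntegrand
  have : ContinuousAt (fun z : ℝ => (z - a) ^ s) z :=
    (continuousAt_id.sub continuousAt_const).rpow_const (Or.inr hs)
  fun_prop

lemma integrableOn_Ioi (k : ℕ) (ha : 0 ≤ a) (hc : 0 < c) (hs : 0 ≤ s) :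
    IntegrableOn (shiftedGammaIntegrand a c s k) (Ioi a) := by
  have hbound : IntegrableOn (fun z : ℝ => z ^ ((k : ℝ) + s) * exp (-c * z)) (Ioi a) := by
    have h := integrableOn_rpow_mul_exp_neg_mul_rpow (s := k + s) (p := 1)
      (by linarith [(Nat.cast_nonneg k : (0 : ℝ) ≤ k)]) one_pos hc
    simp_rw [rpow_one] at h
    exact h.mono_set (Ioi_subset_Ioi ha)
  refine hbound.mono' ((continuousOn k hs).mono Ioi_subset_Ici_self
    |>.aestronglyMeasurable measurableSet_Ioi) ?_
  filter_upwards [ae_restrict_mem measurableSet_Ioi] with z hz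
  exact norm_le k ha hs hz

lemma tendsto_atTop (k : ℕ) (ha : 0 ≤ a) (hc : 0 < c) (hs : 0 ≤ s) :
    Tendsto (shiftedGammaIntegrand a c s k) atTop (𝓝 0) := by
  refine squeeze_zero_norm' ?_ (tendsto_rpow_mul_exp_neg_mul_atTop_nhds_zero (k + s) c hc)
  filter_upwards [eventually_gt_atTop a] with z hz
  exact norm_le k ha hs hz

lemma hasDerivAt (n : ℕ) {z : ℝ} (hz : a < z) :
    HasDerivAt (shiftedGammaIntegrand a c (s + 1) n)
      (-c * shiftedGammaIntegrand a c s (n + 1) z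
        + (n + s + 1 + a * c) * shiftedGammaIntegrand a c s n z
        - n * a * shiftedGammaIntegrand a c s (n - 1) z) z := by
  have hza : z - a ≠ 0 := (sub_pos.2 hz).ne'
  have hpow : HasDerivAt (fun z : ℝ => (z - a) ^ (s + 1)) ((s + 1) * (z - a) ^ s) z := by
    simpa using ((hasDerivAt_id z).sub_const a).rpow_const (p := s + 1) (Or.inl hza)
  have hexp : HasDerivAt (fun z : ℝ => exp (-c * z)) (exp (-c * z) * -c) z := by
    simpa using ((hasDerivAt_id z).const_mul (-c)).exp
  refine ((hasDerivAt_pow n z).mul hpow).mul hexp |>.congr_deriv ?_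
  -- `z ^ (n - 1) * z = z ^ n` fails at `n = 0`, where the factor `n` rescues it
  have hpred : (n : ℝ) * z ^ (n - 1) * z = n * z ^ n := by
    cases n <;> simp [pow_succ, mul_assoc]
  simp only [shiftedGammaIntegrand, Pi.mul_apply, rpow_add_one hza, pow_succ]
  linear_combination (z - a) ^ s * exp (-c * z) * hpred

end shiftedGammaIntegrand

theorem shiftedGammaMoment_recurrence {a c s : ℝ} (n : ℕ) (ha : 0 ≤ a) (hc : 0 < c)
    (hs : 0 ≤ s) :
    c * shiftedGammaMoment a c s (n + 1) - (n + s + 1 + a * c) * shiftedGammaMoment a c s n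
      + n * a * shiftedGammaMoment a c s (n - 1) = 0 := by
  have hs1 : 0 ≤ s + 1 := by linarith
  have hint := fun k => shiftedGammaIntegrand.integrableOn_Ioi k ha hc hs
  have hFTC := integral_Ioi_of_hasDerivAt_of_tendsto
    ((shiftedGammaIntegrand.continuousOn n hs1).continuousWithinAt self_mem_Ici)
    (fun _ hz => shiftedGammaIntegrand.hasDerivAt n hz)
    ((((hint (n + 1)).const_mul (-c)).add ((hint n).const_mul _)).sub
      ((hint (n - 1)).const_mul _))
    (shiftedGammaIntegrand.tendsto_atTop n ha hc hs1)
  rw [integral_sub ?_ ((hint _).const_mul _),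
    integral_add ((hint _).const_mul _) ((hint _).const_mul _), integral_const_mul,
    integral_const_mul, integral_const_mul] at hFTC
  swap
  · exact ((hint _).const_mul _).add ((hint _).const_mul _)
  have hvanish : shiftedGammaIntegrand a c (s + 1) n a = 0 := by
    simp [shiftedGammaIntegrand, zero_rpow (by linarith : s + 1 ≠ 0)]
  rw [hvanish] at hFTC
  unfold shiftedGammaMoment
  linear_combination -hFTC

theorem H_recurrence (ρ θ : ℝ) (hρ : 0 < ρ) (hθ : 0 < θ)
    (H : ℕ → ℝ)
    (hH : ∀ n : ℕ, H n = ∫ z in Set.Ioi (1 / (1 + θ)),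
      z ^ n * (z - 1 / (1 + θ)) ^ (ρ * θ / (1 + θ) ^ 2) * Real.exp (-ρ * z / (1 + θ))) :
    ∀ n : ℕ,
      ρ * H (n + 1) - (((n : ℝ) + 1) * (1 + θ) + ρ) * H n + (n : ℝ) * H (n - 1) = 0 := by
  intro n
  have hθ1 : 0 < 1 + θ := by linarith
  have hH' : ∀ k,
      H k = shiftedGammaMoment (1 / (1 + θ)) (ρ / (1 + θ)) (ρ * θ / (1 + θ) ^ 2) k := by
    intro k
    simp only [hH, shiftedGammaMoment, shiftedGammaIntegrand, neg_mul, neg_div, mul_div_right_comm]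
  have hrec := shiftedGammaMoment_recurrence n (by positivity : 0 ≤ 1 / (1 + θ))
    (by positivity : 0 < ρ / (1 + θ)) (by positivity : 0 ≤ ρ * θ / (1 + θ) ^ 2)
  rw [← hH' (n + 1), ← hH' n, ← hH' (n - 1)] at hrec
  linear_combination (norm := skip) (1 + θ) * hrec
  field_simp
  ring
end

section
/- For τ ≥ 0 and integer n ≥ 0, the function Q_n(τ) = ∫_0^1 (1−z)ⁿ J₀(2√τ √(−z − log(1−z))) dz, expanded via the Bessel series, at τ = 0 equals 1/(n+1), and satisfies the ODE system Q_n′(τ) = (1/(n+1))(Q_{n+1}(τ) − Q_n(τ)). -/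
/-- The Bessel function of the first kind of order 0. -/
noncomputable def besselJ0 (x : ℝ) : ℝ :=
  ∑' k : ℕ, (-1 : ℝ) ^ k * (x / 2) ^ (2 * k) / ((Nat.factorial k : ℝ)) ^ 2

/-- `Q_n(τ)` from the short-time heavy-traffic analysis. -/
noncomputable def Qfun (n : ℕ) (τ : ℝ) : ℝ :=
  ∫ z in (0 : ℝ)..1,
    (1 - z) ^ n * besselJ0 (2 * Real.sqrt τ * Real.sqrt (-z - Real.log (1 - z)))

/-!
Expanding `J₀` and integrating term by term gives
`Q_n(τ) = ∑ₖ (-τ)ᵏ A(n, k) / (k!)²` with moments `A(n, k) = ∫₀¹ (1 - z)ⁿ s(z)ᵏ dz`,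
`s(z) = -z - log (1 - z)`. Since `0 ≤ s(z) ≤ -log (1 - z)`, the substitution `z = 1 - e⁻ˣ`
bounds `|A(n, k)|` by `Γ(k + 1) = k!`; this justifies the interchange and makes the series
entire, so it can be differentiated term by term. Integration by parts, with `s'(z) = z / (1 - z)`,
gives `(n + 1) A(n, k + 1) = (k + 1) (A(n, k) - A(n + 1, k))`, which is the differential equation
read coefficientwise.
-/

open MeasureTheory Real Set Filter Topology
open scoped Nat

/-- The tail `∑_{m ≥ 2} z ^ m / m` of the series of `-log (1 - z)`. -/
noncomputable def logTail (z : ℝ) : ℝ := -z - log (1 - z)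

lemma logTail_nonneg {z : ℝ} (hz : z < 1) : 0 ≤ logTail z := by
  have := log_le_sub_one_of_pos (x := 1 - z) (by linarith)
  rw [logTail]; linarith

lemma hasDerivAt_logTail {z : ℝ} (hz : z < 1) : HasDerivAt logTail (z / (1 - z)) z := by
  have hz' : 1 - z ≠ 0 := by linarith
  have h := (hasDerivAt_neg z).sub (((hasDerivAt_id' z).const_sub 1).log hz')
  exact h.congr_deriv (by field_simp; ring)

lemma integral_exp_neg_mul_pow (k : ℕ) : ∫ x in Ioi (0 : ℝ), exp (-x) * x ^ k = k ! := by
  rw [← Gamma_nat_eq_factorial, Gamma_eq_integral (by positivity)]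
  refine setIntegral_congr_fun measurableSet_Ioi fun x _ => ?_
  simp [← rpow_natCast]

lemma integrableOn_exp_neg_mul_pow (k : ℕ) : IntegrableOn (fun x : ℝ => exp (-x) * x ^ k) (Ioi 0) :=
  (GammaIntegral_convergent (s := k + 1) (by positivity)).congr_fun
    (fun x _ => by simp [← rpow_natCast]) measurableSet_Ioi

lemma one_sub_exp_neg_image_Ioi : (fun x : ℝ => 1 - exp (-x)) '' Ioi 0 = Ioo 0 1 := by
  ext y
  constructor
  · rintro ⟨x, hx, rfl⟩
    have : exp (-x) < 1 := exp_lt_one_iff.mpr (neg_lt_zero.mpr hx)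
    exact ⟨by linarith, by linarith [exp_pos (-x)]⟩
  · rintro ⟨hy0, hy1⟩
    refine ⟨-log (1 - y), neg_pos.mpr (log_neg (by linarith) (by linarith)), ?_⟩
    simp [exp_log (by linarith : 0 < 1 - y)]

lemma integrableOn_neg_log_one_sub_pow_and_integral (k : ℕ) :
    IntegrableOn (fun z : ℝ => (-log (1 - z)) ^ k) (Ioo 0 1) ∧
      ∫ z in Ioo (0 : ℝ) 1, (-log (1 - z)) ^ k = k ! := by
  have hderiv : ∀ x ∈ Ioi (0 : ℝ),
      HasDerivWithinAt (fun x : ℝ => 1 - exp (-x)) (exp (-x)) (Ioi 0) x := fun x _ => by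
    simpa using (((hasDerivAt_id x).neg.exp).const_sub 1).hasDerivWithinAt
  have hinj : InjOn (fun x : ℝ => 1 - exp (-x)) (Ioi 0) := fun a _ b _ h => by simpa using h
  have hpull : EqOn (fun x => |exp (-x)| • (-log (1 - (1 - exp (-x)))) ^ k)
      (fun x => exp (-x) * x ^ k) (Ioi 0) := fun x _ => by
    simp [abs_of_pos (exp_pos _)]
  rw [← one_sub_exp_neg_image_Ioi, integrableOn_image_iff_integrableOn_abs_deriv_smul
      measurableSet_Ioi hderiv hinj, integral_image_eq_integral_abs_deriv_smul
      measurableSet_Ioi hderiv hinj, ← integral_exp_neg_mul_pow k]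
  exact ⟨(integrableOn_exp_neg_mul_pow k).congr_fun hpull.symm measurableSet_Ioi,
    setIntegral_congr_fun measurableSet_Ioi hpull⟩

lemma abs_one_sub_pow_mul_logTail_pow_le (n k : ℕ) {z : ℝ} (hz : z ∈ Ioo (0 : ℝ) 1) :
    |(1 - z) ^ n * logTail z ^ k| ≤ (-log (1 - z)) ^ k := by
  have h1z : 0 ≤ 1 - z := by linarith [hz.2]
  have hs := logTail_nonneg hz.2
  rw [abs_of_nonneg (by positivity)]
  calc (1 - z) ^ n * logTail z ^ k ≤ 1 * logTail z ^ k := by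
        gcongr; exact pow_le_one₀ h1z (by linarith [hz.1])
    _ ≤ (-log (1 - z)) ^ k := by
        rw [one_mul]; gcongr; rw [logTail]; linarith [hz.1]

lemma integrableOn_one_sub_pow_mul_logTail_pow (n k : ℕ) :
    IntegrableOn (fun z => (1 - z) ^ n * logTail z ^ k) (Ioo 0 1) := by
  refine (integrableOn_neg_log_one_sub_pow_and_integral k).1.mono' ?_ ?_
  · refine ContinuousOn.aestronglyMeasurable (fun z hz => ?_) measurableSet_Ioo
    exact (((continuousAt_const.sub continuousAt_id).pow n).mul
      ((hasDerivAt_logTail hz.2).continuousAt.pow k)).continuousWithinAt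
  · filter_upwards [ae_restrict_mem measurableSet_Ioo] with z hz
    exact abs_one_sub_pow_mul_logTail_pow_le n k hz

noncomputable def moment (n k : ℕ) : ℝ := ∫ z in (0 : ℝ)..1, (1 - z) ^ n * logTail z ^ k

lemma integral_abs_one_sub_pow_mul_logTail_pow_le (n k : ℕ) :
    ∫ z in Ioo (0 : ℝ) 1, |(1 - z) ^ n * logTail z ^ k| ≤ k ! := by
  rw [← (integrableOn_neg_log_one_sub_pow_and_integral k).2]
  exact setIntegral_mono_on (integrableOn_one_sub_pow_mul_logTail_pow n k).abs
    (integrableOn_neg_log_one_sub_pow_and_integral k).1 measurableSet_Ioo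
    fun z hz => abs_one_sub_pow_mul_logTail_pow_le n k hz

lemma abs_moment_le (n k : ℕ) : |moment n k| ≤ k ! := by
  rw [moment, intervalIntegral.integral_of_le zero_le_one, integral_Ioc_eq_integral_Ioo]
  exact abs_integral_le_integral_abs.trans (integral_abs_one_sub_pow_mul_logTail_pow_le n k)

lemma tendsto_pow_mul_abs_log_pow_nhdsGT_zero {m : ℕ} (hm : m ≠ 0) (k : ℕ) :
    Tendsto (fun x : ℝ => x ^ m * |log x| ^ k) (𝓝[>] 0) (𝓝 0) := by
  refine (isLittleO_abs_log_rpow_rpow_nhdsGT_zero k (neg_lt_zero.mpr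
    (Nat.cast_pos.mpr (Nat.pos_of_ne_zero hm)))).tendsto_div_nhds_zero.congr' ?_
  filter_upwards [self_mem_nhdsWithin] with x (hx : 0 < x)
  rw [rpow_neg hx.le, rpow_natCast, rpow_natCast, div_inv_eq_mul, mul_comm]

lemma tendsto_one_sub_pow_succ_mul_logTail_pow_nhdsLT_one (n k : ℕ) :
    Tendsto (fun z => (1 - z) ^ (n + 1) * logTail z ^ k) (𝓝[<] 1) (𝓝 0) := by
  have hsub : Tendsto (fun z : ℝ => 1 - z) (𝓝[<] 1) (𝓝[>] 0) := by
    simpa using (continuous_sub_left (1 : ℝ)).continuousWithinAt.tendsto_nhdsWithin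
      (x := 1) (s := Iio 1) (t := Ioi 0) fun z hz => sub_pos.mpr hz
  refine squeeze_zero_norm' ?_
    ((tendsto_pow_mul_abs_log_pow_nhdsGT_zero n.succ_ne_zero k).comp hsub)
  filter_upwards [Ioo_mem_nhdsLT zero_lt_one] with z hz
  have h1z : 0 < 1 - z := by linarith [hz.2]
  rw [Real.norm_eq_abs, Function.comp_apply, abs_of_neg (log_neg h1z (by linarith [hz.1])),
    abs_mul, abs_of_pos (pow_pos h1z _), abs_pow, abs_of_nonneg (logTail_nonneg hz.2)]
  gcongr
  · exact logTail_nonneg hz.2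
  · rw [logTail]; linarith [hz.1]

/-- Integrate the derivative of `(1 - z) ^ (n + 1) * logTail z ^ (k + 1)` over `(0, 1)`:
since `logTail' z = z / (1 - z)` and `z = 1 - (1 - z)`, it is a combination of three moments. -/
lemma moment_succ (n k : ℕ) :
    (n + 1 : ℝ) * moment n (k + 1) = (k + 1) * (moment n k - moment (n + 1) k) := by
  set f : ℕ → ℕ → ℝ → ℝ := fun n k z => (1 - z) ^ n * logTail z ^ k
  have hderiv : ∀ z < 1, HasDerivAt (f (n + 1) (k + 1))
      ((k + 1) * f n k z - (k + 1) * f (n + 1) k z - (n + 1) * f n (k + 1) z) z := by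
    intro z hz
    have h1z : 1 - z ≠ 0 := by linarith
    have h := (((hasDerivAt_id' z).const_sub 1).pow (n + 1)).mul
      ((hasDerivAt_logTail hz).pow (k + 1))
    refine h.congr_deriv ?_
    simp only [f, Pi.pow_apply, Nat.add_sub_cancel, Nat.cast_add, Nat.cast_one, pow_succ]
    field_simp
    ring
  have hint : ∀ n k, IntervalIntegrable (f n k) volume 0 1 := fun n k =>
    (intervalIntegrable_iff_integrableOn_Ioo_of_le zero_le_one).mpr
      (integrableOn_one_sub_pow_mul_logTail_pow n k)
  have hF0 : Tendsto (f (n + 1) (k + 1)) (𝓝[>] 0) (𝓝 0) := by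
    simpa [f, logTail] using
      (hderiv 0 zero_lt_one).continuousAt.tendsto.mono_left nhdsWithin_le_nhds
  have h1 := (hint n k).const_mul ((k : ℝ) + 1)
  have h2 := (hint (n + 1) k).const_mul ((k : ℝ) + 1)
  have h3 := (hint n (k + 1)).const_mul ((n : ℝ) + 1)
  have hibp := intervalIntegral.integral_eq_sub_of_hasDerivAt_of_tendsto zero_lt_one
    (fun z hz => hderiv z hz.2) ((h1.sub h2).sub h3) hF0
    (tendsto_one_sub_pow_succ_mul_logTail_pow_nhdsLT_one n (k + 1))
  rw [intervalIntegral.integral_sub (h1.sub h2) h3, intervalIntegral.integral_sub h1 h2,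
    intervalIntegral.integral_const_mul, intervalIntegral.integral_const_mul,
    intervalIntegral.integral_const_mul] at hibp
  simp only [moment]
  linarith

lemma summable_mul_pow_of_abs_le_inv_factorial {c : ℕ → ℝ} (hc : ∀ k, |c k| ≤ (k ! : ℝ)⁻¹)
    (t : ℝ) : Summable fun k => c k * t ^ k := by
  refine Summable.of_norm_bounded (Real.summable_pow_div_factorial |t|) fun k => ?_
  rw [norm_mul, norm_pow, Real.norm_eq_abs, Real.norm_eq_abs, div_eq_inv_mul]
  gcongr
  exact hc k

lemma hasDerivAt_tsum_mul_pow_of_abs_le_inv_factorial {c : ℕ → ℝ}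
    (hc : ∀ k, |c k| ≤ (k ! : ℝ)⁻¹) (t : ℝ) :
    HasDerivAt (fun t => ∑' k, c k * t ^ k) (∑' k, (k + 1) * c (k + 1) * t ^ k) t := by
  set R := |t| + 1
  have ht : t ∈ Metric.ball 0 R := by simp [R]
  have hbound : ∀ k, ∀ y ∈ Metric.ball (0 : ℝ) R,
      ‖c k * (k * y ^ (k - 1))‖ ≤ (k ! : ℝ)⁻¹ * (k * R ^ (k - 1)) := fun k y hy => by
    rw [mem_ball_zero_iff, Real.norm_eq_abs] at hy
    rw [norm_mul, norm_mul, norm_pow, Real.norm_eq_abs, Real.norm_eq_abs, Nat.abs_cast]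
    gcongr
    exacts [hc k, hy.le]
  have hu : Summable fun k => (k ! : ℝ)⁻¹ * (k * R ^ (k - 1)) := by
    refine (summable_nat_add_iff 1).mp ((Real.summable_pow_div_factorial R).congr fun k => ?_)
    push_cast [Nat.factorial_succ, Nat.add_sub_cancel]
    field_simp
  have h := hasDerivAt_tsum_of_isPreconnected hu Metric.isOpen_ball
    (convex_ball (0 : ℝ) R).isPreconnected
    (fun k y _ => (hasDerivAt_pow k y).const_mul (c k)) hbound ht
    (summable_mul_pow_of_abs_le_inv_factorial hc t) ht
  rw [(Summable.of_norm_bounded hu fun k => hbound k t ht).tsum_eq_zero_add] at h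
  refine h.congr_deriv ?_
  simp only [CharP.cast_eq_zero, zero_mul, mul_zero, zero_add, Nat.add_sub_cancel]
  exact tsum_congr fun k => by push_cast; ring

noncomputable def qCoeff (n k : ℕ) : ℝ := (-1) ^ k * moment n k / (k ! : ℝ) ^ 2

lemma abs_qCoeff_le (n k : ℕ) : |qCoeff n k| ≤ (k ! : ℝ)⁻¹ := by
  have hk : (0 : ℝ) < k ! := by positivity
  rw [qCoeff, abs_div, abs_mul, abs_pow, abs_neg, abs_one, one_pow, one_mul, abs_pow,
    Nat.abs_cast, div_le_iff₀ (by positivity), sq, ← mul_assoc, inv_mul_cancel₀ hk.ne', one_mul]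
  exact abs_moment_le n k

lemma qCoeff_succ (n k : ℕ) :
    (k + 1) * qCoeff n (k + 1) = (qCoeff (n + 1) k - qCoeff n k) / (n + 1) := by
  have hrec := moment_succ n k
  simp only [qCoeff, Nat.factorial_succ, Nat.cast_mul, Nat.cast_add, Nat.cast_one]
  field_simp
  linear_combination -(-1) ^ k * hrec

noncomputable def qSeries (n : ℕ) (t : ℝ) : ℝ := ∑' k, qCoeff n k * t ^ k

lemma hasDerivAt_qSeries (n : ℕ) (t : ℝ) :
    HasDerivAt (qSeries n) ((qSeries (n + 1) t - qSeries n t) / (n + 1)) t := by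
  refine (hasDerivAt_tsum_mul_pow_of_abs_le_inv_factorial (abs_qCoeff_le n) t).congr_deriv ?_
  simp only [qSeries, qCoeff_succ, div_mul_eq_mul_div, sub_mul]
  rw [tsum_div_const,
    ← (summable_mul_pow_of_abs_le_inv_factorial (abs_qCoeff_le (n + 1)) t).tsum_sub
      (summable_mul_pow_of_abs_le_inv_factorial (abs_qCoeff_le n) t)]

lemma besselJ0_zero : besselJ0 0 = 1 := by
  rw [besselJ0, tsum_eq_single 0 fun k hk => by simp [hk]]
  simp

lemma besselJ0_two_mul_sqrt_mul_sqrt {a b : ℝ} (ha : 0 ≤ a) (hb : 0 ≤ b) :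
    besselJ0 (2 * √a * √b) = ∑' k : ℕ, (-1) ^ k * (a * b) ^ k / (k ! : ℝ) ^ 2 := by
  refine tsum_congr fun k => ?_
  rw [pow_mul, show 2 * √a * √b / 2 = √a * √b by ring, mul_pow, sq_sqrt ha, sq_sqrt hb]

lemma Qfun_eq_qSeries (n : ℕ) {τ : ℝ} (hτ : 0 ≤ τ) : Qfun n τ = qSeries n τ := by
  set term : ℕ → ℝ → ℝ := fun k z =>
    (-1) ^ k * τ ^ k / (k ! : ℝ) ^ 2 * ((1 - z) ^ n * logTail z ^ k)
  have hint : ∀ k, Integrable (term k) (volume.restrict (Ioo 0 1)) := fun k =>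
    (integrableOn_one_sub_pow_mul_logTail_pow n k).const_mul _
  have hsum : Summable fun k => ∫ z in Ioo (0 : ℝ) 1, ‖term k z‖ := by
    refine (Real.summable_pow_div_factorial τ).of_nonneg_of_le
      (fun k => integral_nonneg fun z => norm_nonneg _) fun k => ?_
    have hnorm : ∀ z, ‖term k z‖ = τ ^ k / (k ! : ℝ) ^ 2 * |(1 - z) ^ n * logTail z ^ k| :=
      fun z => by simp [term, abs_of_nonneg hτ]
    simp_rw [hnorm, integral_const_mul]
    calc τ ^ k / (k ! : ℝ) ^ 2 * ∫ z in Ioo (0 : ℝ) 1, |(1 - z) ^ n * logTail z ^ k|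
        ≤ τ ^ k / (k ! : ℝ) ^ 2 * k ! := by
          gcongr
          exact integral_abs_one_sub_pow_mul_logTail_pow_le n k
      _ = τ ^ k / k ! := by field_simp
  rw [Qfun, intervalIntegral.integral_of_le zero_le_one, integral_Ioc_eq_integral_Ioo]
  calc ∫ z in Ioo (0 : ℝ) 1, (1 - z) ^ n * besselJ0 (2 * √τ * √(-z - log (1 - z)))
      = ∫ z in Ioo (0 : ℝ) 1, ∑' k, term k z := by
        refine setIntegral_congr_fun measurableSet_Ioo fun z hz => ?_
        change (1 - z) ^ n * besselJ0 (2 * √τ * √(logTail z)) = _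
        rw [besselJ0_two_mul_sqrt_mul_sqrt hτ (logTail_nonneg hz.2), ← tsum_mul_left]
        exact tsum_congr fun k => by simp only [term]; ring
    _ = ∑' k, ∫ z in Ioo (0 : ℝ) 1, term k z :=
        (integral_tsum_of_summable_integral_norm hint hsum).symm
    _ = qSeries n τ := by
        refine tsum_congr fun k => ?_
        rw [integral_const_mul, ← integral_Ioc_eq_integral_Ioo, ← intervalIntegral.integral_of_le
          zero_le_one, qCoeff, ← moment]
        ring

theorem Q_initial_value_and_ode (n : ℕ) :
    Qfun n 0 = 1 / ((n : ℝ) + 1) ∧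
      ∀ τ : ℝ, 0 ≤ τ →
        HasDerivWithinAt (Qfun n) ((Qfun (n + 1) τ - Qfun n τ) / ((n : ℝ) + 1))
          (Set.Ici 0) τ := by
  refine ⟨?_, fun τ hτ => ?_⟩
  · simp [Qfun, besselJ0_zero, intervalIntegral.integral_comp_sub_left fun z => z ^ n]
  · rw [Qfun_eq_qSeries n hτ, Qfun_eq_qSeries (n + 1) hτ]
    exact (hasDerivAt_qSeries n τ).hasDerivWithinAt.congr
      (fun t ht => Qfun_eq_qSeries n ht) (Qfun_eq_qSeries n hτ)
end
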